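/- Channel simulation for extremal qubit channels: let 0 ≤ b ≤ 1, 0 < c ≤ 1, 0 ≤ c' ≤ c, with bc ≠ 1 and bc' ≠ 1. Let N_{b,c} and N_{b,c'} be the extremal qubit channels with Kraus operators K₀(b,t) = [[√((1+b)(1+t)/(2(1+bt))), 0],[0, √((1−b)(1+t)/(2(1−bt)))]] and K₁(b,t) = [[0, √((1+b)(1−t)/(2(1−bt)))],[√((1−b)(1−t)/(2(1+bt))), 0]] for t = c and t = c', respectively. Then there exist 2×2 complex matrices M₀, M₁ with M₀†M₀ + M₁†M₁ = I such that N_{b,c'}(X) = Σ_{i,j ∈ {0,1}} K_i(b,c) M_j X M_j† K_i(b,c)† for every 2×2 complex matrix X; that is, N_{b,c'} = N_{b,c} ∘ M for a quantum channel M, so decreasing c makes the channel noisier. -/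

import Mathlib

/-!
The simulating channel is again extremal: `N_{b,c'} = N_{b,c} ∘ N_{bc, c'/c}`. A channel with
Kraus pair `diag(p, q)`, `[[0, r], [s, 0]]` sends `X` to the matrix with diagonal
`p²X₀₀ + r²X₁₁`, `s²X₀₀ + q²X₁₁` and off-diagonal entries `pq X₀₁ + rs X₁₀`, `pq X₁₀ + rs X₀₁`,
so the composition law reduces to six real identities. Those for the squared amplitudes are
rational identities. For the products, `pq = (1+t)/2 · κ(b,t)` and `rs = (1-t)/2 · κ(b,t)` with
`κ(b,t) = √((1-b²)/(1-b²t²))`, and `κ(b,c) κ(bc,t) = κ(b,ct)`.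
-/

open Matrix

/-- The two Kraus operators `K₀(b,t), K₁(b,t)` of the extremal qubit channel `N_{b,t}`. -/
noncomputable def extKraus (b t : ℝ) : Fin 2 → Matrix (Fin 2) (Fin 2) ℂ :=
  ![!![(Real.sqrt ((1 + b) * (1 + t) / (2 * (1 + b * t))) : ℂ), 0;
       0, (Real.sqrt ((1 - b) * (1 + t) / (2 * (1 - b * t))) : ℂ)],
    !![0, (Real.sqrt ((1 + b) * (1 - t) / (2 * (1 - b * t))) : ℂ);
       (Real.sqrt ((1 - b) * (1 - t) / (2 * (1 + b * t))) : ℂ), 0]]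

theorem abs_mul_le_one {x y : ℝ} (hx : |x| ≤ 1) (hy : |y| ≤ 1) : |x * y| ≤ 1 := by
  rw [abs_mul]
  exact mul_le_one₀ hx (abs_nonneg y) hy

theorem abs_mul_lt_one {x y : ℝ} (hx : |x| < 1) (hy : |y| ≤ 1) : |x * y| < 1 := by
  rw [abs_mul]
  exact mul_lt_one_of_nonneg_of_lt_one_left (abs_nonneg x) hx hy

section KrausChannel

variable {R n ι κ : Type*} [Semiring R] [Star R] [Fintype n] [Fintype ι] [Fintype κ]

def krausChannel (K : ι → Matrix n n R) (X : Matrix n n R) : Matrix n n R :=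
  ∑ i, K i * X * (K i)ᴴ

theorem krausChannel_krausChannel (K : ι → Matrix n n R) (M : κ → Matrix n n R)
    (X : Matrix n n R) :
    krausChannel K (krausChannel M X) = ∑ i, ∑ j, K i * (M j * X * (M j)ᴴ) * (K i)ᴴ := by
  simp only [krausChannel, Matrix.mul_sum, Matrix.sum_mul]

end KrausChannel

section DiagAntidiag

def diagAntidiagKraus (p q r s : ℝ) : Fin 2 → Matrix (Fin 2) (Fin 2) ℂ :=
  ![!![(p : ℂ), 0; 0, (q : ℂ)], !![0, (r : ℂ); (s : ℂ), 0]]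

theorem sum_conjTranspose_mul_diagAntidiagKraus {p q r s : ℝ} (hps : p ^ 2 + s ^ 2 = 1)
    (hqr : q ^ 2 + r ^ 2 = 1) :
    ∑ i, (diagAntidiagKraus p q r s i)ᴴ * diagAntidiagKraus p q r s i = 1 := by
  have hps' : (p : ℂ) ^ 2 + (s : ℂ) ^ 2 = 1 := by exact_mod_cast hps
  have hqr' : (q : ℂ) ^ 2 + (r : ℂ) ^ 2 = 1 := by exact_mod_cast hqr
  ext i j
  fin_cases i <;> fin_cases j <;>
    simp [diagAntidiagKraus, Fin.sum_univ_two, Matrix.mul_apply, ← sq, hps', hqr']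

theorem krausChannel_diagAntidiagKraus (p q r s : ℝ) (X : Matrix (Fin 2) (Fin 2) ℂ) :
    krausChannel (diagAntidiagKraus p q r s) X =
      !![p ^ 2 * X 0 0 + r ^ 2 * X 1 1, p * q * X 0 1 + r * s * X 1 0;
        p * q * X 1 0 + r * s * X 0 1, s ^ 2 * X 0 0 + q ^ 2 * X 1 1] := by
  ext i j
  fin_cases i <;> fin_cases j <;>
    simp only [krausChannel, diagAntidiagKraus, Fin.zero_eta, Fin.isValue, Fin.mk_one,
      Matrix.sum_apply, Matrix.mul_apply, Fin.sum_univ_two, conjTranspose_apply, RCLike.star_def,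
      cons_val_zero, of_apply, cons_val', cons_val_fin_one, cons_val_one, zero_mul, add_zero,
      Complex.conj_ofReal, map_zero, mul_zero, zero_add] <;>
    ring

theorem krausChannel_diagAntidiagKraus_comp {p q r s p' q' r' s' P Q R S : ℝ}
    (hP : P ^ 2 = p ^ 2 * p' ^ 2 + r ^ 2 * s' ^ 2)
    (hR : R ^ 2 = p ^ 2 * r' ^ 2 + r ^ 2 * q' ^ 2)
    (hS : S ^ 2 = q ^ 2 * s' ^ 2 + s ^ 2 * p' ^ 2)
    (hQ : Q ^ 2 = q ^ 2 * q' ^ 2 + s ^ 2 * r' ^ 2)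
    (hPQ : P * Q = p * q * (p' * q') + r * s * (r' * s'))
    (hRS : R * S = p * q * (r' * s') + r * s * (p' * q')) (X : Matrix (Fin 2) (Fin 2) ℂ) :
    krausChannel (diagAntidiagKraus p q r s) (krausChannel (diagAntidiagKraus p' q' r' s') X) =
      krausChannel (diagAntidiagKraus P Q R S) X := by
  apply_fun ((↑) : ℝ → ℂ) at hP hR hS hQ hPQ hRS
  push_cast at hP hR hS hQ hPQ hRS
  simp only [krausChannel_diagAntidiagKraus]
  ext i j
  fin_cases i <;> fin_cases j <;> simp only [of_apply, cons_val', cons_val_zero, cons_val_one,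
    empty_val', cons_val_fin_one, Fin.zero_eta, Fin.mk_one]
  · linear_combination -X 0 0 * hP - X 1 1 * hR
  · linear_combination -X 0 1 * hPQ - X 1 0 * hRS
  · linear_combination -X 1 0 * hPQ - X 0 1 * hRS
  · linear_combination -X 0 0 * hS - X 1 1 * hQ

end DiagAntidiag

section ExtremalChannel

noncomputable def extAmp (b t : ℝ) : ℝ := √((1 + b) * (1 + t) / (2 * (1 + b * t)))

noncomputable def extCoherence (b t : ℝ) : ℝ := √((1 - b ^ 2) / (1 - (b * t) ^ 2))

theorem extKraus_eq_diagAntidiagKraus (b t : ℝ) :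
    extKraus b t =
      diagAntidiagKraus (extAmp b t) (extAmp (-b) t) (extAmp b (-t)) (extAmp (-b) (-t)) := by
  simp only [extKraus, diagAntidiagKraus, extAmp, neg_mul, mul_neg, neg_neg, ← sub_eq_add_neg]

variable {b c t : ℝ}

theorem extAmp_sq (hb : |b| ≤ 1) (ht : |t| ≤ 1) (hbt : |b * t| < 1) :
    extAmp b t ^ 2 = (1 + b) * (1 + t) / (2 * (1 + b * t)) := by
  rw [abs_le] at hb ht
  have := neg_lt_of_abs_lt hbt
  exact Real.sq_sqrt (by apply div_nonneg <;> nlinarith)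

theorem extAmp_mul_extAmp_neg (hb : |b| ≤ 1) (ht : |t| ≤ 1) (hbt : |b * t| < 1) :
    extAmp b t * extAmp (-b) t = (1 + t) / 2 * extCoherence b t := by
  rw [abs_le] at hb ht
  obtain ⟨hbt₁, hbt₂⟩ := abs_lt.mp hbt
  have h1 : 1 + b * t ≠ 0 := by linarith
  have h2 : 1 - b * t ≠ 0 := by linarith
  have h3 : 1 - b ^ 2 * t ^ 2 ≠ 0 := by nlinarith
  rw [extAmp, extAmp, extCoherence, ← Real.sqrt_mul (by apply div_nonneg <;> nlinarith),
    ← abs_of_nonneg (show 0 ≤ (1 + t) / 2 by linarith), ← Real.sqrt_sq_eq_abs,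
    ← Real.sqrt_mul (sq_nonneg _)]
  congr 1
  rw [neg_mul, ← sub_eq_add_neg, ← sub_eq_add_neg]
  field_simp
  ring

theorem extCoherence_neg_right (b t : ℝ) : extCoherence b (-t) = extCoherence b t := by
  simp only [extCoherence, mul_neg, neg_sq]

theorem extCoherence_mul (hb : |b| ≤ 1) (hbc : |b * c| < 1) :
    extCoherence b c * extCoherence (b * c) t = extCoherence b (c * t) := by
  have h1 : 0 ≤ 1 - b ^ 2 := by nlinarith [sq_abs b, abs_nonneg b]
  have h2 : 0 < 1 - (b * c) ^ 2 := by nlinarith [sq_abs (b * c), abs_nonneg (b * c)]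
  rw [extCoherence, extCoherence, extCoherence, ← Real.sqrt_mul (div_nonneg h1 h2.le),
    div_mul_div_cancel₀ h2.ne', mul_assoc]

theorem extAmp_sq_comp (hb : |b| ≤ 1) (hc : |c| ≤ 1) (ht : |t| ≤ 1) (hbc : |b * c| < 1) :
    extAmp b (c * t) ^ 2 =
      extAmp b c ^ 2 * extAmp (b * c) t ^ 2 + extAmp b (-c) ^ 2 * extAmp (-(b * c)) (-t) ^ 2 := by
  have hbct : |b * c * t| < 1 := abs_mul_lt_one hbc ht
  rw [extAmp_sq hb (abs_mul_le_one hc ht) (by rwa [← mul_assoc]),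
    extAmp_sq hb hc hbc, extAmp_sq hbc.le ht hbct,
    extAmp_sq hb (by rwa [abs_neg]) (by rwa [mul_neg, abs_neg]),
    extAmp_sq (by rw [abs_neg]; exact hbc.le) (by rwa [abs_neg]) (by rwa [neg_mul_neg])]
  obtain ⟨hbc₁, hbc₂⟩ := abs_lt.mp hbc
  obtain ⟨hbct₁, hbct₂⟩ := abs_lt.mp hbct
  have h1 : 1 + b * c ≠ 0 := by linarith
  have h2 : 1 - b * c ≠ 0 := by linarith
  have h3 : 1 + b * c * t ≠ 0 := by linarith
  simp only [neg_mul, mul_neg, neg_neg, ← sub_eq_add_neg, ← mul_assoc]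
  field_simp
  ring

theorem extAmp_mul_comp (hb : |b| ≤ 1) (hc : |c| ≤ 1) (ht : |t| ≤ 1) (hbc : |b * c| < 1) :
    extAmp b (c * t) * extAmp (-b) (c * t) =
      extAmp b c * extAmp (-b) c * (extAmp (b * c) t * extAmp (-(b * c)) t) +
        extAmp b (-c) * extAmp (-b) (-c) * (extAmp (b * c) (-t) * extAmp (-(b * c)) (-t)) := by
  have hbct : |b * c * t| < 1 := abs_mul_lt_one hbc ht
  have hnc : |-c| ≤ 1 := by rwa [abs_neg]
  have hnt : |-t| ≤ 1 := by rwa [abs_neg]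
  rw [extAmp_mul_extAmp_neg hb (abs_mul_le_one hc ht) (by rwa [← mul_assoc]),
    extAmp_mul_extAmp_neg hb hc hbc, extAmp_mul_extAmp_neg hbc.le ht hbct,
    extAmp_mul_extAmp_neg hb hnc (by rwa [mul_neg, abs_neg]),
    extAmp_mul_extAmp_neg hbc.le hnt (by rwa [mul_neg, abs_neg]),
    extCoherence_neg_right, extCoherence_neg_right, ← extCoherence_mul hb hbc]
  ring

theorem extAmp_sq_add_extAmp_neg_neg_sq (hb : |b| ≤ 1) (ht : |t| ≤ 1) (hbt : |b * t| < 1) :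
    extAmp b t ^ 2 + extAmp (-b) (-t) ^ 2 = 1 := by
  rw [extAmp_sq hb ht hbt, extAmp_sq (by rwa [abs_neg]) (by rwa [abs_neg]) (by rwa [neg_mul_neg])]
  have : 1 + b * t ≠ 0 := by linarith [neg_lt_of_abs_lt hbt]
  simp only [neg_mul_neg]
  field_simp
  ring

theorem sum_conjTranspose_mul_extKraus (hb : |b| ≤ 1) (ht : |t| ≤ 1) (hbt : |b * t| < 1) :
    ∑ i, (extKraus b t i)ᴴ * extKraus b t i = 1 := by
  rw [extKraus_eq_diagAntidiagKraus]
  refine sum_conjTranspose_mul_diagAntidiagKraus (extAmp_sq_add_extAmp_neg_neg_sq hb ht hbt) ?_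
  simpa only [neg_neg, neg_mul] using
    extAmp_sq_add_extAmp_neg_neg_sq (b := -b) (by rwa [abs_neg]) ht (by rwa [neg_mul, abs_neg])

theorem krausChannel_extKraus_comp (hb : |b| ≤ 1) (hc : |c| ≤ 1) (ht : |t| ≤ 1)
    (hbc : |b * c| < 1) (X : Matrix (Fin 2) (Fin 2) ℂ) :
    krausChannel (extKraus b c) (krausChannel (extKraus (b * c) t) X) =
      krausChannel (extKraus b (c * t)) X := by
  have hnb : |-b| ≤ 1 := by rwa [abs_neg]
  have hnt : |-t| ≤ 1 := by rwa [abs_neg]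
  have hnbc : |-b * c| < 1 := by rwa [neg_mul, abs_neg]
  simp only [extKraus_eq_diagAntidiagKraus]
  apply krausChannel_diagAntidiagKraus_comp
  · exact extAmp_sq_comp hb hc ht hbc
  · simpa only [mul_neg, neg_neg] using extAmp_sq_comp hb hc hnt hbc
  · simpa only [mul_neg, neg_mul, neg_neg] using extAmp_sq_comp hnb hc hnt hnbc
  · simpa only [neg_mul, neg_neg] using extAmp_sq_comp hnb hc ht hnbc
  · exact extAmp_mul_comp hb hc ht hbc
  · simpa only [mul_neg, neg_neg] using extAmp_mul_comp hb hc hnt hbc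

end ExtremalChannel

theorem stmt_11_general (b c c' : ℝ) (hb0 : 0 ≤ b) (hb1 : b ≤ 1) (hc0 : 0 < c) (hc1 : c ≤ 1)
    (hc'0 : 0 ≤ c') (hc'c : c' ≤ c) (hbc : b * c ≠ 1) :
    ∃ M₀ M₁ : Matrix (Fin 2) (Fin 2) ℂ,
      M₀ᴴ * M₀ + M₁ᴴ * M₁ = 1 ∧
      ∀ X : Matrix (Fin 2) (Fin 2) ℂ,
        ∑ i, extKraus b c' i * X * (extKraus b c' i)ᴴ
          = ∑ i, ∑ j, extKraus b c i * (![M₀, M₁] j * X * (![M₀, M₁] j)ᴴ)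
              * (extKraus b c i)ᴴ := by
  have hb : |b| ≤ 1 := abs_le.mpr ⟨by linarith, hb1⟩
  have hc : |c| ≤ 1 := abs_le.mpr ⟨by linarith, hc1⟩
  have ht : |c' / c| ≤ 1 := by
    rw [abs_of_nonneg (div_nonneg hc'0 hc0.le)]
    exact div_le_one_of_le₀ hc'c hc0.le
  have hbc_lt : |b * c| < 1 := by
    rw [abs_of_nonneg (mul_nonneg hb0 hc0.le)]
    exact lt_of_le_of_ne (mul_le_one₀ hb1 hc0.le hc1) hbc
  let M := extKraus (b * c) (c' / c)
  have hM : ![M 0, M 1] = M := FinVec.etaExpand_eq M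
  refine ⟨M 0, M 1, ?_, fun X => ?_⟩
  · simpa only [Fin.sum_univ_two] using
      sum_conjTranspose_mul_extKraus hbc_lt.le ht (abs_mul_lt_one hbc_lt ht)
  · rw [hM, ← krausChannel_krausChannel, krausChannel_extKraus_comp hb hc ht hbc_lt,
      mul_div_cancel₀ c' hc0.ne']
    rfl

/-- Channel simulation for extremal qubit channels: for
`0 ≤ b ≤ 1`, `0 < c ≤ 1`, `0 ≤ c' ≤ c` with `bc ≠ 1` and `bc' ≠ 1`, there is a quantum
channel `M` (given by Kraus operators `M₀, M₁`) with `N_{b,c'} = N_{b,c} ∘ M`; that is,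
decreasing `c` makes the channel noisier. -/
theorem stmt_11 (b c c' : ℝ) (hb0 : 0 ≤ b) (hb1 : b ≤ 1) (hc0 : 0 < c) (hc1 : c ≤ 1)
    (hc'0 : 0 ≤ c') (hc'c : c' ≤ c) (hbc : b * c ≠ 1) (hbc' : b * c' ≠ 1) :
    ∃ M₀ M₁ : Matrix (Fin 2) (Fin 2) ℂ,
      M₀ᴴ * M₀ + M₁ᴴ * M₁ = 1 ∧
      ∀ X : Matrix (Fin 2) (Fin 2) ℂ,
        ∑ i, extKraus b c' i * X * (extKraus b c' i)ᴴ
          = ∑ i, ∑ j, extKraus b c i * (![M₀, M₁] j * X * (![M₀, M₁] j)ᴴ)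
              * (extKraus b c i)ᴴ :=
  stmt_11_general b c c' hb0 hb1 hc0 hc1 hc'0 hc'c hbc
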